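/- Let σ' be a nonempty finite CNN request sequence whose last request is r' = r(x',y'), and let W' = W_{σ'} be its work function. Then every point (x,y) ∈ ℝ² is dominated with respect to W' by the point (x',y) or by the point (x,y'). -/

import Mathlib

noncomputable section

/-- The L1 metric on `ℝ²` (the CNN metric space). -/
def dL1 (p q : ℝ × ℝ) : ℝ := |p.1 - q.1| + |p.2 - q.2|

/-- The CNN request associated with a point `(x, y)`. -/
def req (p : ℝ × ℝ) : Set (ℝ × ℝ) := {q | q.1 = p.1 ∨ q.2 = p.2}

/-- The work function of a finite CNN request sequence (requests listed in order of arrival),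
starting at origin `O`. -/
noncomputable def WF (O : ℝ × ℝ) : List (ℝ × ℝ) → (ℝ × ℝ) → ℝ
  | [], s => dL1 O s
  | p :: l, s => sInf ((fun t => dL1 O t + WF t l s) '' req p)

/-- `t` dominates `s` with respect to `W` if `W s = W t + d(s,t)`. -/
def Dominates (W : ℝ × ℝ → ℝ) (t s : ℝ × ℝ) : Prop :=
  W s = W t + dL1 s t

/-!
Unfolding the recursion from its last step, `W'(s) = inf_{u ∈ r(p)} (W(u) + d(u, s))` where `W`
is the work function of the sequence without its last request. Such an inf-convolution is
1-Lipschitz, so `W'(s) ≤ W'(t) + d(s, t)` for every `t`. Conversely, each `u ∈ r(p)` shares a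
coordinate with `p`, so one of `(p.1, y)` and `(x, p.2)` is a corner of the box spanned by `u` and
`s = (x, y)`, hence lies on an L¹ geodesic from `u` to `s`; every term of the infimum is therefore
at least `W'(t) + d(t, s)` for one of these two points `t`.
-/

open Set Function

lemma dL1_nonneg (p q : ℝ × ℝ) : 0 ≤ dL1 p q :=
  add_nonneg (abs_nonneg _) (abs_nonneg _)

lemma dL1_comm (p q : ℝ × ℝ) : dL1 p q = dL1 q p := by
  simp only [dL1, abs_sub_comm]

lemma dL1_triangle (p q r : ℝ × ℝ) : dL1 p r ≤ dL1 p q + dL1 q r := by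
  unfold dL1
  linarith [abs_sub_le p.1 q.1 r.1, abs_sub_le p.2 q.2 r.2]

lemma dL1_eq_add_of_corner {u t s : ℝ × ℝ} (h₁ : t.1 = u.1) (h₂ : t.2 = s.2) :
    dL1 u s = dL1 u t + dL1 t s := by
  simp only [dL1, h₁, h₂, sub_self, abs_zero]
  ring

lemma dL1_eq_add_of_corner' {u t s : ℝ × ℝ} (h₁ : t.1 = s.1) (h₂ : t.2 = u.2) :
    dL1 u s = dL1 u t + dL1 t s := by
  simp only [dL1, h₁, h₂, sub_self, abs_zero]
  ring

lemma bddBelow_range_of_nonneg {ι : Type*} {f : ι → ℝ} (hf : ∀ i, 0 ≤ f i) :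
    BddBelow (range f) :=
  ⟨0, forall_mem_range.2 hf⟩

lemma ciInf_comm {ι κ α : Type*} [ConditionallyCompleteLattice α] {g : ι → κ → α}
    (hg : BddBelow (range (uncurry g))) : ⨅ i, ⨅ j, g i j = ⨅ j, ⨅ i, g i j := by
  have hg' : BddBelow (range fun q : κ × ι => g q.2 q.1) := by
    rwa [← (Equiv.prodComm κ ι).surjective.range_comp] at hg
  calc ⨅ i, ⨅ j, g i j = ⨅ q : ι × κ, uncurry g q := (ciInf_prod hg).symm
    _ = ⨅ q : κ × ι, g q.2 q.1 := ((Equiv.prodComm κ ι).iInf_comp (g := uncurry g)).symm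
    _ = ⨅ j, ⨅ i, g i j := ciInf_prod hg'

instance req_nonempty (p : ℝ × ℝ) : Nonempty (req p) := ⟨⟨p, Or.inl rfl⟩⟩

lemma WF_nonneg (O : ℝ × ℝ) (l : List (ℝ × ℝ)) (s : ℝ × ℝ) : 0 ≤ WF O l s := by
  induction l generalizing O with
  | nil => exact dL1_nonneg O s
  | cons p l ih =>
    exact Real.sInf_nonneg (by rintro _ ⟨t, -, rfl⟩; exact add_nonneg (dL1_nonneg O t) (ih t))

lemma WF_cons (O p : ℝ × ℝ) (l : List (ℝ × ℝ)) (s : ℝ × ℝ) :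
    WF O (p :: l) s = ⨅ t : req p, dL1 O t + WF t l s :=
  sInf_image'

lemma WF_append_singleton (O p : ℝ × ℝ) (l : List (ℝ × ℝ)) (s : ℝ × ℝ) :
    WF O (l ++ [p]) s = ⨅ u : req p, WF O l u + dL1 u s := by
  induction l generalizing O with
  | nil => exact sInf_image'
  | cons q l ih =>
    calc WF O (q :: l ++ [p]) s
        = ⨅ t : req q, dL1 O t + ⨅ u : req p, (WF t l u + dL1 u s) := by
          simp only [List.cons_append, WF_cons, ih]
      _ = ⨅ t : req q, ⨅ u : req p, dL1 O t + WF t l u + dL1 u s := by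
          refine congrArg _ (funext fun t => ?_)
          rw [add_ciInf (bddBelow_range_of_nonneg fun u => add_nonneg (WF_nonneg _ _ _)
            (dL1_nonneg _ _))]
          simp only [add_assoc]
      _ = ⨅ u : req p, ⨅ t : req q, dL1 O t + WF t l u + dL1 u s :=
          ciInf_comm (bddBelow_range_of_nonneg fun _ =>
            add_nonneg (add_nonneg (dL1_nonneg _ _) (WF_nonneg _ _ _)) (dL1_nonneg _ _))
      _ = ⨅ u : req p, WF O (q :: l) u + dL1 u s := by
          refine congrArg _ (funext fun u => ?_)
          rw [WF_cons, ciInf_add (bddBelow_range_of_nonneg fun t => add_nonneg (dL1_nonneg _ _)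
            (WF_nonneg _ _ _))]

section InfConvolution

variable {V : ℝ × ℝ → ℝ} {S : Set (ℝ × ℝ)} [Nonempty S]

lemma iInf_add_dL1_le (hV : ∀ u, 0 ≤ V u) (s t : ℝ × ℝ) :
    ⨅ u : S, V u + dL1 u s ≤ (⨅ u : S, V u + dL1 u t) + dL1 t s := by
  rw [ciInf_add (bddBelow_range_of_nonneg fun u : S => add_nonneg (hV u) (dL1_nonneg u t))]
  exact ciInf_mono (bddBelow_range_of_nonneg fun u : S => add_nonneg (hV u) (dL1_nonneg u s))
    fun u => by linarith [dL1_triangle u t s]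

lemma le_iInf_add_dL1_or (hV : ∀ u, 0 ≤ V u) {s t₁ t₂ : ℝ × ℝ}
    (h : ∀ u ∈ S, dL1 u s = dL1 u t₁ + dL1 t₁ s ∨ dL1 u s = dL1 u t₂ + dL1 t₂ s) :
    (⨅ u : S, V u + dL1 u t₁) + dL1 t₁ s ≤ ⨅ u : S, V u + dL1 u s ∨
      (⨅ u : S, V u + dL1 u t₂) + dL1 t₂ s ≤ ⨅ u : S, V u + dL1 u s := by
  have hle (t : ℝ × ℝ) (u : S) : ⨅ u : S, V u + dL1 u t ≤ V u + dL1 u t :=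
    ciInf_le (bddBelow_range_of_nonneg fun u : S => add_nonneg (hV u) (dL1_nonneg u t)) u
  rw [← min_le_iff]
  refine le_ciInf fun u => ?_
  rcases h u u.2 with h | h
  · exact min_le_of_left_le (by linarith [hle t₁ u])
  · exact min_le_of_right_le (by linarith [hle t₂ u])

end InfConvolution

/-- If the last request of the (nonempty) sequence `σ'` is `r(x',y')`, then every point
`(x,y)` is dominated w.r.t. `W_{σ'}` by `(x',y)` or by `(x,y')`. -/
theorem dominated_by_projection (O : ℝ × ℝ) (l : List (ℝ × ℝ)) (p : ℝ × ℝ) (x y : ℝ) :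
    Dominates (WF O (l ++ [p])) (p.1, y) (x, y) ∨
      Dominates (WF O (l ++ [p])) (x, p.2) (x, y) := by
  have hW : WF O (l ++ [p]) = fun s => ⨅ u : req p, WF O l u + dL1 u s :=
    funext (WF_append_singleton O p l)
  have hcorner : ∀ u ∈ req p, dL1 u (x, y) = dL1 u (p.1, y) + dL1 (p.1, y) (x, y) ∨
      dL1 u (x, y) = dL1 u (x, p.2) + dL1 (x, p.2) (x, y) := by
    rintro u (hu | hu)
    · exact Or.inl (dL1_eq_add_of_corner hu.symm rfl)
    · exact Or.inr (dL1_eq_add_of_corner' rfl hu.symm)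
  simp only [Dominates, hW, dL1_comm (x, y)]
  exact (le_iInf_add_dL1_or (WF_nonneg O l) hcorner).imp
    (iInf_add_dL1_le (WF_nonneg O l) _ _).antisymm (iInf_add_dL1_le (WF_nonneg O l) _ _).antisymm
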